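/- Let X be a set, f : X → X a map, δ > 1 a real number, and ĥ : X → ℝ≥0 a nonnegative function satisfying ĥ(f(x)) = δ·ĥ(x) for all x, such that for every real B the set {x ∈ X | ĥ(x) ≤ B} is finite. Then for x ∈ X, ĥ(x) = 0 if and only if x is preperiodic under f (i.e. fⁿ(x) = fᵐ(x) for some n > m ≥ 0). -/
import Mathlib


theorem stmt_1 {X : Type*} (f : X → X) (δ : ℝ) (hδ : 1 < δ)
    (hhat : X → ℝ) (hnn : ∀ x, 0 ≤ hhat x)
    (hscale : ∀ x, hhat (f x) = δ * hhat x)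
    (hfin : ∀ B : ℝ, {x : X | hhat x ≤ B}.Finite)
    (x : X) :
    hhat x = 0 ↔ ∃ n m : ℕ, m < n ∧ f^[n] x = f^[m] x := by
  have hiter : ∀ n : ℕ, hhat (f^[n] x) = δ ^ n * hhat x := by
    intro n
    induction n with
    | zero => simp
    | succ n ih =>
      rw [Function.iterate_succ_apply', hscale, ih, pow_succ]
      ring
  constructor
  · intro h0
    have horbit : ∀ n : ℕ, f^[n] x ∈ {y : X | hhat y ≤ 0} := by
      intro n; simp [Set.mem_setOf_eq, hiter, h0]
    have hninj : ¬ Function.Injective (fun n : ℕ => f^[n] x) := by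
      intro hinj
      exact Set.infinite_of_injective_forall_mem hinj horbit (hfin 0)
    simp only [Function.Injective, not_forall] at hninj
    obtain ⟨a, b, hab, hne⟩ := hninj
    rcases lt_or_gt_of_ne hne with h | h
    · exact ⟨b, a, h, hab.symm⟩
    · exact ⟨a, b, h, hab⟩
  · rintro ⟨n, m, hmn, heq⟩
    have := hiter n
    rw [heq, hiter m] at this
    have hδ0 : (0:ℝ) < δ := lt_trans one_pos hδ
    by_contra hne
    have hx : 0 < hhat x := lt_of_le_of_ne (hnn x) (Ne.symm hne)
    have hlt : δ ^ m < δ ^ n := pow_lt_pow_right₀ hδ hmn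
    nlinarith
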